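/- Let q \ge 2, d \ge 6, j \ge 2, and 1 \le i \le d-3 with j \le d-i-1. Then (43/78) |T_{h_{max}}(i,j)| \le |Q_j(i)| \le (113/78) |T_{h_{max}}(i,j)|, where h_{max} = min(j, d-i) = j. In particular Q_j(i) has the same sign as T_{h_{max}}(i,j). -/

import Mathlib

/-!
Comparing consecutive terms through the Gaussian-binomial recursions gives
`|T_h| / |T_{h+1}| ≈ q^{-(d-i-h)}`, with exponent at least `2` for `h = j - 1` and at least `3`
below. Bounding the factors `|(-q)^k - 1|` by `q^k ± 1` turns this into
`|T_{j-1}| ≤ 5/16 |T_j|` and `|T_h| ≤ 17/56 |T_{h+1}|` for `h ≤ j - 2` (the polynomial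
inequalities behind both constants are equalities at `q = 2`), so the terms below `T_j` sum to at
most `5/16 · 56/39 = 35/78` of `|T_j|`.
-/

/-- The Gaussian binomial coefficient with (possibly negative) base `b`:
`[m choose l]_b = ∏_{t=1}^{l} (b^{m-t+1}-1)/(b^t-1)`. -/
def gaussBinom (b : ℚ) (m l : ℕ) : ℚ :=
  ∏ t ∈ Finset.range l, (b ^ (m - t) - 1) / (b ^ (t + 1) - 1)

/-- The `h`-th term of the eigenvalue expression for the Hermitian forms graph `Q_q(d,j)`:
`T_h(i,j) = (-1)^j (-q)^{C(j-h,2)+hd} [d-h, d-j]_b [d-i, h]_b` with `b = -q`. -/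
def hermT (q : ℚ) (d i j h : ℕ) : ℚ :=
  (-1 : ℚ) ^ j * (-q) ^ ((j - h).choose 2 + h * d) *
    gaussBinom (-q) (d - h) (d - j) * gaussBinom (-q) (d - i) h

/-- The eigenvalue `Q_j(i)` of the Hermitian forms graph `Q_q(d,j)`. -/
def hermQ (q : ℚ) (d j i : ℕ) : ℚ :=
  ∑ h ∈ Finset.range (min j (d - i) + 1), hermT q d i j h

open Finset

section OrderedRing

variable {R : Type*} [CommRing R] [LinearOrder R] [IsStrictOrderedRing R]

lemma le_abs_pow_sub_one (b : R) (k : ℕ) : |b| ^ k - 1 ≤ |b ^ k - 1| := by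
  simpa only [abs_pow, abs_one] using abs_sub_abs_le_abs_sub (b ^ k) 1

lemma abs_pow_sub_one_le (b : R) (k : ℕ) : |b ^ k - 1| ≤ |b| ^ k + 1 := by
  simpa only [abs_pow, abs_one] using abs_sub (b ^ k) 1

lemma abs_pow_sub_one_pos {b : R} (hb : 1 < |b|) {k : ℕ} (hk : k ≠ 0) : 0 < |b ^ k - 1| :=
  (sub_pos.2 (one_lt_pow₀ hb hk)).trans_le (le_abs_pow_sub_one b k)

lemma pow_add_add_one_le_mul {q : R} (hq : 1 ≤ q) (m k : ℕ) :
    q ^ (m + k) + 1 ≤ q ^ m * (q ^ k + 1) := by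
  rw [pow_add, mul_add_one]
  linarith [one_le_pow₀ (n := m) hq]

lemma mul_pow_sub_one_le {q : R} (hq : 1 ≤ q) (m k : ℕ) :
    q ^ m * (q ^ k - 1) ≤ q ^ (m + k) - 1 := by
  rw [pow_add, mul_sub_one]
  linarith [one_le_pow₀ (n := m) hq]

end OrderedRing

section OrderedField

variable {K : Type*} [Field K] [LinearOrder K] [IsStrictOrderedRing K]

lemma sum_range_le_of_succ_le_mul {g : ℕ → K} {r : K} {n : ℕ} (hr0 : 0 ≤ r) (hr1 : r < 1)
    (hg0 : 0 ≤ g 0) (hg : ∀ v, v + 1 < n → g (v + 1) ≤ r * g v) :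
    ∑ v ∈ range n, g v ≤ g 0 / (1 - r) := by
  have hpow : ∀ v < n, g v ≤ r ^ v * g 0 := by
    intro v
    induction v with
    | zero => simp
    | succ v ih =>
      intro hv
      calc g (v + 1) ≤ r * g v := hg v hv
        _ ≤ r * (r ^ v * g 0) := mul_le_mul_of_nonneg_left (ih (by omega)) hr0
        _ = r ^ (v + 1) * g 0 := by ring
  calc ∑ v ∈ range n, g v ≤ ∑ v ∈ range n, r ^ v * g 0 :=
        sum_le_sum fun v hv => hpow v (mem_range.1 hv)
    _ = (∑ v ∈ Ico 0 n, r ^ v) * g 0 := by rw [← sum_mul, range_eq_Ico]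
    _ ≤ r ^ 0 / (1 - r) * g 0 :=
        mul_le_mul_of_nonneg_right (geom_sum_Ico_le_of_lt_one hr0 hr1) hg0
    _ = g 0 / (1 - r) := by ring

lemma abs_le_and_pos_of_abs_sub_le {x y c : K} (hc : c < 1) (hy : y ≠ 0)
    (h : |x - y| ≤ c * |y|) :
    (1 - c) * |y| ≤ |x| ∧ |x| ≤ (1 + c) * |y| ∧ 0 < x * y := by
  have hlow : |y| - |x| ≤ |x - y| := abs_sub_comm x y ▸ abs_sub_abs_le_abs_sub y x
  have hupp : |x| - |y| ≤ |x - y| := abs_sub_abs_le_abs_sub x y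
  refine ⟨by linarith, by linarith, ?_⟩
  have hy' : 0 < |y| := abs_pos.2 hy
  have hxy : -(|x - y| * |y|) ≤ (x - y) * y := by rw [← abs_mul]; exact neg_abs_le _
  have hyy : y * y = |y| * |y| := (abs_mul_abs_self y).symm
  linarith [mul_le_mul_of_nonneg_right h hy'.le, mul_pos (sub_pos.2 hc) (mul_pos hy' hy')]

end OrderedField

lemma gaussBinom_succ_right (b : ℚ) (m l : ℕ) :
    gaussBinom b m (l + 1) = gaussBinom b m l * ((b ^ (m - l) - 1) / (b ^ (l + 1) - 1)) :=
  prod_range_succ _ _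

lemma gaussBinom_succ_left_mul (b : ℚ) (m l : ℕ) :
    gaussBinom b (m + 1) l * (b ^ (m + 1 - l) - 1) = gaussBinom b m l * (b ^ (m + 1) - 1) := by
  simp only [gaussBinom, prod_div_distrib, div_mul_eq_mul_div]
  rw [← prod_range_succ (fun t => b ^ (m + 1 - t) - 1), prod_range_succ']
  simp only [Nat.add_sub_add_right, Nat.sub_zero]

lemma gaussBinom_ne_zero {b : ℚ} (hb : 1 < |b|) {m l : ℕ} (h : l ≤ m) :
    gaussBinom b m l ≠ 0 :=
  prod_ne_zero_iff.2 fun t ht => div_ne_zero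
    (abs_pos.1 (abs_pow_sub_one_pos hb (by rw [mem_range] at ht; omega)))
    (abs_pos.1 (abs_pow_sub_one_pos hb (by omega)))

lemma hermT_ne_zero {q : ℚ} (hq : 1 < |q|) {d i j h : ℕ} (hhj : h ≤ j) (hjd : j ≤ d)
    (hhi : h ≤ d - i) : hermT q d i j h ≠ 0 := by
  have hq' : 1 < |-q| := by rwa [abs_neg]
  have hq0 : -q ≠ 0 := neg_ne_zero.2 (abs_pos.1 (one_pos.trans hq))
  unfold hermT
  exact mul_ne_zero (mul_ne_zero (mul_ne_zero (pow_ne_zero _ (by norm_num)) (pow_ne_zero _ hq0))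
    (gaussBinom_ne_zero hq' (by omega))) (gaussBinom_ne_zero hq' hhi)

lemma hermT_succ_mul {q : ℚ} (hq : 1 < |q|) {d i j h : ℕ} (hhj : h < j) (hjd : j ≤ d) :
    hermT q d i j (h + 1) * ((-q) ^ (d - h) - 1) * ((-q) ^ (h + 1) - 1) =
      hermT q d i j h * (-q) ^ (d + h + 1 - j) * ((-q) ^ (j - h) - 1) *
        ((-q) ^ (d - i - h) - 1) := by
  have hq' : 1 < |-q| := by rwa [abs_neg]
  have hexp : (j - (h + 1)).choose 2 + (h + 1) * d =
      (j - h).choose 2 + h * d + (d + h + 1 - j) := by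
    obtain ⟨k, rfl⟩ : ∃ k, j = h + 1 + k := ⟨j - h - 1, by omega⟩
    have hchoose : (k + 1).choose 2 = k.choose 2 + k := by
      rw [Nat.choose_succ_succ', Nat.choose_one_right, add_comm]
    rw [show h + 1 + k - h = k + 1 by omega, show h + 1 + k - (h + 1) = k by omega, hchoose,
      add_one_mul]
    omega
  have htop : gaussBinom (-q) (d - (h + 1)) (d - j) * ((-q) ^ (d - h) - 1) =
      gaussBinom (-q) (d - h) (d - j) * ((-q) ^ (j - h) - 1) := by
    have := gaussBinom_succ_left_mul (-q) (d - (h + 1)) (d - j)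
    rwa [show d - (h + 1) + 1 = d - h by omega, show d - h - (d - j) = j - h by omega,
      eq_comm] at this
  have hbot : gaussBinom (-q) (d - i) (h + 1) * ((-q) ^ (h + 1) - 1) =
      gaussBinom (-q) (d - i) h * ((-q) ^ (d - i - h) - 1) := by
    rw [gaussBinom_succ_right, mul_assoc, div_mul_cancel₀ _
      (abs_pos.1 (abs_pow_sub_one_pos hq' h.succ_ne_zero))]
  unfold hermT
  rw [hexp, pow_add]
  linear_combination
    (-1 : ℚ) ^ j * (-q) ^ ((j - h).choose 2 + h * d) * (-q) ^ (d + h + 1 - j) *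
      (gaussBinom (-q) (d - (h + 1)) (d - j) * ((-q) ^ (d - h) - 1) * hbot +
        gaussBinom (-q) (d - i) h * ((-q) ^ (d - i - h) - 1) * htop)

section RatioBounds

variable {K : Type*} [Field K] [LinearOrder K] [IsStrictOrderedRing K] {q : K}

lemma leading_ratio_poly_le (hq : 2 ≤ q) :
    16 * ((q ^ 3 + 1) * (q ^ 2 + 1)) ≤ 5 * (q ^ 4 * (q + 1) * (q ^ 2 - 1)) := by
  obtain ⟨t, ht, rfl⟩ : ∃ t ≥ 0, q = 2 + t := ⟨q - 2, by linarith, by ring⟩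
  rw [← sub_nonneg]; ring_nf; positivity

lemma tail_ratio_poly_le (hq : 2 ≤ q) :
    56 * ((q ^ 4 + 1) * (q + 1)) ≤ 17 * (q ^ 3 * (q ^ 2 - 1) * (q ^ 3 - 1)) := by
  obtain ⟨t, ht, rfl⟩ : ∃ t ≥ 0, q = 2 + t := ⟨q - 2, by linarith, by ring⟩
  rw [← sub_nonneg]; ring_nf; positivity

lemma leading_ratio_bound (hq : 2 ≤ q) {M C P B : ℕ} (hM : 3 ≤ M) (hC : 2 ≤ C)
    (hB : 2 ≤ B) (hP : M + C = P + 1) :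
    (q ^ M + 1) * (q ^ C + 1) ≤ 5 / 16 * (q ^ P * (q + 1) * (q ^ B - 1)) := by
  have hq1 : 1 ≤ q := by linarith
  obtain ⟨m, rfl⟩ : ∃ m, M = m + 3 := ⟨M - 3, by omega⟩
  obtain ⟨c, rfl⟩ : ∃ c, C = c + 2 := ⟨C - 2, by omega⟩
  obtain rfl : P = m + c + 4 := by omega
  calc (q ^ (m + 3) + 1) * (q ^ (c + 2) + 1) ≤ (q ^ m * (q ^ 3 + 1)) * (q ^ c * (q ^ 2 + 1)) :=
        mul_le_mul (pow_add_add_one_le_mul hq1 m 3) (pow_add_add_one_le_mul hq1 c 2)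
          (by positivity) (by positivity)
    _ = q ^ m * q ^ c * (16 * ((q ^ 3 + 1) * (q ^ 2 + 1))) / 16 := by ring
    _ ≤ q ^ m * q ^ c * (5 * (q ^ 4 * (q + 1) * (q ^ 2 - 1))) / 16 := by
        gcongr q ^ m * q ^ c * ?_ / 16; exact leading_ratio_poly_le hq
    _ = 5 / 16 * (q ^ (m + c + 4) * (q + 1) * (q ^ 2 - 1)) := by ring
    _ ≤ 5 / 16 * (q ^ (m + c + 4) * (q + 1) * (q ^ B - 1)) := by gcongr

lemma tail_ratio_bound (hq : 2 ≤ q) {M C P A B : ℕ} (hM : 4 ≤ M) (hC : 1 ≤ C) (hA : 2 ≤ A)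
    (hB : 3 ≤ B) (hP : M + C = P + A) :
    (q ^ M + 1) * (q ^ C + 1) ≤ 17 / 56 * (q ^ P * (q ^ A - 1) * (q ^ B - 1)) := by
  have hq1 : 1 ≤ q := by linarith
  obtain ⟨m, rfl⟩ : ∃ m, M = m + 4 := ⟨M - 4, by omega⟩
  obtain ⟨c, rfl⟩ : ∃ c, C = c + 1 := ⟨C - 1, by omega⟩
  obtain ⟨a, rfl⟩ : ∃ a, A = a + 2 := ⟨A - 2, by omega⟩
  have hPa : q ^ m * q ^ c * q ^ 3 = q ^ P * q ^ a := by
    rw [← pow_add, ← pow_add, ← pow_add]; congr 1; omega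
  have hq3 : 0 ≤ q ^ 3 - 1 := sub_nonneg.2 (one_le_pow₀ hq1)
  calc (q ^ (m + 4) + 1) * (q ^ (c + 1) + 1) ≤ (q ^ m * (q ^ 4 + 1)) * (q ^ c * (q ^ 1 + 1)) :=
        mul_le_mul (pow_add_add_one_le_mul hq1 m 4) (pow_add_add_one_le_mul hq1 c 1)
          (by positivity) (by positivity)
    _ = q ^ m * q ^ c * (56 * ((q ^ 4 + 1) * (q + 1))) / 56 := by ring
    _ ≤ q ^ m * q ^ c * (17 * (q ^ 3 * (q ^ 2 - 1) * (q ^ 3 - 1))) / 56 := by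
        gcongr q ^ m * q ^ c * ?_ / 56; exact tail_ratio_poly_le hq
    _ = 17 / 56 * (q ^ P * (q ^ a * (q ^ 2 - 1)) * (q ^ 3 - 1)) := by
        rw [← mul_assoc (q ^ P), ← hPa]; ring
    _ ≤ 17 / 56 * (q ^ P * (q ^ (a + 2) - 1) * (q ^ B - 1)) := by
        gcongr 17 / 56 * (q ^ P * ?_ * ?_)
        · exact mul_nonneg (by positivity) (sub_nonneg.2 (one_le_pow₀ hq1))
        · exact mul_pow_sub_one_le hq1 a 2
        · gcongr

end RatioBounds

section HermT

variable {q : ℚ} {d i j : ℕ}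

lemma abs_hermT_le_of_factor_le (hq : 1 < q) {h : ℕ} (hhj : h < j) (hjd : j ≤ d)
    (hhi : h < d - i) {r : ℚ} (hr : |(-q) ^ (d - h) - 1| * |(-q) ^ (h + 1) - 1| ≤
      r * (q ^ (d + h + 1 - j) * |(-q) ^ (j - h) - 1| * |(-q) ^ (d - i - h) - 1|)) :
    |hermT q d i j h| ≤ r * |hermT q d i j (h + 1)| := by
  have hq0 : 0 < q := one_pos.trans hq
  have hq' : 1 < |-q| := by rwa [abs_neg, abs_of_pos hq0]
  have hX : 0 < q ^ (d + h + 1 - j) * |(-q) ^ (j - h) - 1| * |(-q) ^ (d - i - h) - 1| :=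
    mul_pos (mul_pos (pow_pos hq0 _) (abs_pow_sub_one_pos hq' (by omega)))
      (abs_pow_sub_one_pos hq' (by omega))
  have heq := congrArg abs (hermT_succ_mul (i := i) (abs_neg q ▸ hq') hhj hjd)
  simp only [abs_mul, abs_pow, abs_neg, abs_of_pos hq0] at heq
  refine le_of_mul_le_mul_right ?_ hX
  calc |hermT q d i j h| * (q ^ (d + h + 1 - j) * |(-q) ^ (j - h) - 1| * |(-q) ^ (d - i - h) - 1|)
      = |hermT q d i j (h + 1)| * (|(-q) ^ (d - h) - 1| * |(-q) ^ (h + 1) - 1|) := by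
        linear_combination heq.symm
    _ ≤ |hermT q d i j (h + 1)| *
          (r * (q ^ (d + h + 1 - j) * |(-q) ^ (j - h) - 1| * |(-q) ^ (d - i - h) - 1|)) :=
        mul_le_mul_of_nonneg_left hr (abs_nonneg _)
    _ = r * |hermT q d i j (h + 1)| *
          (q ^ (d + h + 1 - j) * |(-q) ^ (j - h) - 1| * |(-q) ^ (d - i - h) - 1|) := by ring

variable (hq : 2 ≤ q) (hi : 1 ≤ i) (hji : j ≤ d - i - 1)
include hq hi hji

lemma abs_hermT_pred_le (hj : 2 ≤ j) :
    |hermT q d i j (j - 1)| ≤ 5 / 16 * |hermT q d i j j| := by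
  have hq0 : 0 ≤ q := by linarith
  have hqa : |-q| = q := by rw [abs_neg, abs_of_nonneg hq0]
  have key : |hermT q d i j (j - 1)| ≤ 5 / 16 * |hermT q d i j (j - 1 + 1)| := by
    refine abs_hermT_le_of_factor_le (by linarith) (by omega) (by omega) (by omega) ?_
    rw [show j - 1 + 1 = j by omega, show d + (j - 1) + 1 - j = d by omega,
      show j - (j - 1) = 1 by omega, pow_one, show -q - 1 = -(q + 1) by ring, abs_neg,
      abs_of_nonneg (by linarith : 0 ≤ q + 1)]
    calc |(-q) ^ (d - (j - 1)) - 1| * |(-q) ^ j - 1| ≤ (q ^ (d - (j - 1)) + 1) * (q ^ j + 1) :=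
          mul_le_mul (by simpa only [hqa] using abs_pow_sub_one_le (-q) _)
            (by simpa only [hqa] using abs_pow_sub_one_le (-q) _) (abs_nonneg _) (by positivity)
      _ ≤ 5 / 16 * (q ^ d * (q + 1) * (q ^ (d - i - (j - 1)) - 1)) :=
          leading_ratio_bound hq (by omega) hj (by omega) (by omega)
      _ ≤ 5 / 16 * (q ^ d * (q + 1) * |(-q) ^ (d - i - (j - 1)) - 1|) := by
          gcongr; simpa only [hqa] using le_abs_pow_sub_one (-q) _
  rwa [Nat.sub_add_cancel (by omega : 1 ≤ j)] at key

lemma abs_hermT_le_of_add_two_le {h : ℕ} (hh : h + 2 ≤ j) :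
    |hermT q d i j h| ≤ 17 / 56 * |hermT q d i j (h + 1)| := by
  have hq0 : 0 ≤ q := by linarith
  have hqa : |-q| = q := by rw [abs_neg, abs_of_nonneg hq0]
  refine abs_hermT_le_of_factor_le (by linarith) (by omega) (by omega) (by omega) ?_
  calc |(-q) ^ (d - h) - 1| * |(-q) ^ (h + 1) - 1| ≤ (q ^ (d - h) + 1) * (q ^ (h + 1) + 1) :=
        mul_le_mul (by simpa only [hqa] using abs_pow_sub_one_le (-q) _)
          (by simpa only [hqa] using abs_pow_sub_one_le (-q) _) (abs_nonneg _) (by positivity)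
    _ ≤ 17 / 56 * (q ^ (d + h + 1 - j) * (q ^ (j - h) - 1) * (q ^ (d - i - h) - 1)) :=
        tail_ratio_bound hq (by omega) (by omega) (by omega) (by omega) (by omega)
    _ ≤ 17 / 56 * (q ^ (d + h + 1 - j) * |(-q) ^ (j - h) - 1| * |(-q) ^ (d - i - h) - 1|) := by
        have hqB : 0 ≤ q ^ (d - i - h) - 1 := sub_nonneg.2 (one_le_pow₀ (by linarith))
        gcongr <;> simpa only [hqa] using le_abs_pow_sub_one (-q) _

lemma sum_abs_hermT_le (hj : 2 ≤ j) :
    ∑ h ∈ range j, |hermT q d i j h| ≤ 35 / 78 * |hermT q d i j j| := by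
  rw [← sum_range_reflect]
  calc ∑ v ∈ range j, |hermT q d i j (j - 1 - v)|
        ≤ |hermT q d i j (j - 1 - 0)| / (1 - 17 / 56) :=
        sum_range_le_of_succ_le_mul (by norm_num) (by norm_num) (abs_nonneg _) fun v hv => by
          have := abs_hermT_le_of_add_two_le hq hi hji (h := j - 1 - (v + 1)) (by omega)
          rwa [show j - 1 - (v + 1) + 1 = j - 1 - v by omega] at this
    _ ≤ 5 / 16 * |hermT q d i j j| / (1 - 17 / 56) := by
        gcongr; exact abs_hermT_pred_le hq hi hji hj
    _ = 35 / 78 * |hermT q d i j j| := by ring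

end HermT

theorem hermQ_main_term_bounds_general (q d i j : ℕ) (hq : 2 ≤ q)
    (hj : 2 ≤ j) (hi1 : 1 ≤ i) (hji : j ≤ d - i - 1) :
    (43 / 78 : ℚ) * |hermT (q : ℚ) d i j j| ≤ |hermQ (q : ℚ) d j i| ∧
    |hermQ (q : ℚ) d j i| ≤ (113 / 78 : ℚ) * |hermT (q : ℚ) d i j j| ∧
    0 < hermQ (q : ℚ) d j i * hermT (q : ℚ) d i j j := by
  have hq' : (2 : ℚ) ≤ q := by exact_mod_cast hq
  have htail : hermQ q d j i - hermT q d i j j = ∑ h ∈ range j, hermT q d i j h := by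
    rw [hermQ, min_eq_left (by omega), sum_range_succ, add_sub_cancel_right]
  have hclose : |hermQ q d j i - hermT q d i j j| ≤ 35 / 78 * |hermT q d i j j| :=
    htail ▸ (abs_sum_le_sum_abs _ _).trans (sum_abs_hermT_le hq' hi1 hji hj)
  have hT : hermT q d i j j ≠ 0 := hermT_ne_zero
    (by rw [abs_of_nonneg (by linarith)]; linarith) le_rfl (by omega) (by omega)
  obtain ⟨hlower, hupper, hsign⟩ := abs_le_and_pos_of_abs_sub_le (by norm_num) hT hclose
  exact ⟨by linarith, by linarith, hsign⟩

theorem hermQ_main_term_bounds (q d i j : ℕ) (hq : 2 ≤ q) (hd : 6 ≤ d)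
    (hj : 2 ≤ j) (hi1 : 1 ≤ i) (hi2 : i ≤ d - 3) (hji : j ≤ d - i - 1) :
    (43 / 78 : ℚ) * |hermT (q : ℚ) d i j j| ≤ |hermQ (q : ℚ) d j i| ∧
    |hermQ (q : ℚ) d j i| ≤ (113 / 78 : ℚ) * |hermT (q : ℚ) d i j j| ∧
    0 < hermQ (q : ℚ) d j i * hermT (q : ℚ) d i j j :=
  hermQ_main_term_bounds_general q d i j hq hj hi1 hji
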